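/- arXiv:math/0412563 — 2 statements merged into one kernel-verified Lean document; each statement's English description precedes it below -/
import Mathlib

section
/- Let Y be a Banach space, X a Banach space, Φ : X → Y a continuous linear surjective operator, A ⊆ X a bounded open convex set, K ⊆ Y a compact set with K ⊆ Φ(A), and z ∈ K, u ∈ Φ⁻¹(z) ∩ A. Then there exists a continuous function f : K → closure(A) such that Φ(f(y)) = y for all y ∈ K and f(z) = u. -/
/-!
Michael's selection argument, with the value at one point pinned. Write `F t = A ∩ Φ⁻¹{p t}`.
Since `Φ` is open and `A` is open, "`x` lies within `δ` of `F t`" is an open condition in `t`,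
and the sets `thickening δ (F t) ∩ ball (g t) ε` are convex, so a partition of unity turns an
`ε`-approximate selection `g` into a `δ`-approximate one within `ε` of `g`. Imposing the value
`{u}` at the pinned point keeps the family convex and locally admits the constant `u`.
Iterating with `εₙ = M (1/2)ⁿ`, starting from the constant `u` (where `A ⊆ ball u M`), gives
a uniformly Cauchy sequence; its limit lies in `closure (F t) ⊆ closure A ∩ Φ⁻¹{p t}`.
-/

open Set Metric Bornology

/-- The Lebesgue covering dimension of a topological space, as an element of `ℕ∞`:
the least `n` such that every open cover admits an open refinement covering the space
in which every point belongs to at most `n + 1` sets. -/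
noncomputable def coveringDim (X : Type*) [TopologicalSpace X] : ℕ∞ :=
  sInf {n : ℕ∞ | ∀ 𝒰 : Set (Set X), (∀ U ∈ 𝒰, IsOpen U) → ⋃₀ 𝒰 = univ →
    ∃ 𝒱 : Set (Set X), (∀ V ∈ 𝒱, IsOpen V) ∧ ⋃₀ 𝒱 = univ ∧
      (∀ V ∈ 𝒱, ∃ U ∈ 𝒰, V ⊆ U) ∧
      ∀ x : X, {V ∈ 𝒱 | x ∈ V}.encard ≤ n + 1}

open Filter Topology

theorem exists_seq_of_forall_exists_succ {α : Type*} {P : ℕ → α → Prop}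
    {R : ℕ → α → α → Prop} {a₀ : α} (h₀ : P 0 a₀)
    (h : ∀ n a, P n a → ∃ b, P (n + 1) b ∧ R n a b) :
    ∃ s : ℕ → α, ∀ n, P n (s n) ∧ R n (s n) (s (n + 1)) := by
  choose! next hnextP hnextR using h
  let s : ℕ → α := fun n => Nat.rec a₀ next n
  have hs : ∀ n, P n (s n) := fun n => by
    induction n with
    | zero => exact h₀
    | succ n ih => exact hnextP n (s n) ih
  exact ⟨s, fun n => ⟨hs n, hnextR n (s n) (hs n)⟩⟩

theorem mem_closure_of_tendsto_of_mem_thickening {X : Type*} [PseudoMetricSpace X]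
    {x : ℕ → X} {a : X} {s : Set X} {ε : ℕ → ℝ} (hx : Tendsto x atTop (𝓝 a))
    (hε : Tendsto ε atTop (𝓝 0)) (hmem : ∀ n, x n ∈ thickening (ε n) s) : a ∈ closure s := by
  refine Metric.mem_closure_iff.2 fun δ hδ => ?_
  obtain ⟨n, hxn, hεn⟩ := ((hx.eventually (ball_mem_nhds a (half_pos hδ))).and
    (hε.eventually (gt_mem_nhds (half_pos hδ)))).exists
  obtain ⟨b, hb, hxb⟩ := mem_thickening_iff.1 (hmem n)
  refine ⟨b, hb, ?_⟩
  calc dist a b ≤ dist a (x n) + dist (x n) b := dist_triangle _ _ _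
    _ < δ / 2 + δ / 2 := add_lt_add (mem_ball'.1 hxn) (hxb.trans hεn)
    _ = δ := add_halves δ

theorem isOpen_setOf_mem_thickening_inter_preimage {X Y : Type*} [PseudoMetricSpace X]
    [TopologicalSpace Y] {Φ : X → Y} (hΦ : IsOpenMap Φ) {A : Set X} (hA : IsOpen A)
    (x : X) (δ : ℝ) : IsOpen {y | x ∈ thickening δ (A ∩ Φ ⁻¹' {y})} := by
  convert hΦ _ (hA.inter isOpen_ball) using 1
  ext y
  simp only [mem_ofPred_eq, mem_thickening_iff, mem_inter_iff, mem_preimage, mem_singleton_iff,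
    mem_image, mem_ball']
  constructor
  · rintro ⟨a, ⟨ha, rfl⟩, hxa⟩
    exact ⟨a, ⟨ha, hxa⟩, rfl⟩
  · rintro ⟨a, ⟨ha, hxa⟩, rfl⟩
    exact ⟨a, ⟨ha, rfl⟩, hxa⟩

section Selection

variable {T X Y : Type*} [TopologicalSpace T]
  [NormedAddCommGroup X] [NormedSpace ℝ X] [NormedAddCommGroup Y] [NormedSpace ℝ Y]
  {Φ : X →L[ℝ] Y} {A : Set X} {p : T → Y} {t₀ : T} {u : X}

theorem exists_continuous_finer_approx_selection [NormalSpace T] [ParacompactSpace T]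
    [T1Space T] (hΦ : IsOpenMap Φ) (hAo : IsOpen A) (hAc : Convex ℝ A) (hp : Continuous p)
    (hu : u ∈ A ∩ Φ ⁻¹' {p t₀}) {ε δ : ℝ} (hε : 0 < ε) (hδ : 0 < δ) (g : C(T, X))
    (hg : ∀ t, g t ∈ thickening ε (A ∩ Φ ⁻¹' {p t})) (hg₀ : g t₀ = u) :
    ∃ g' : C(T, X), (∀ t, g' t ∈ thickening δ (A ∩ Φ ⁻¹' {p t})) ∧
      (∀ t, dist (g' t) (g t) < ε) ∧ g' t₀ = u := by
  classical
  set F : T → Set X := fun t => A ∩ Φ ⁻¹' {p t}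
  have hloc : ∀ t c, c ∈ F t → dist (g t) c < ε →
      ∀ᶠ s in 𝓝 t, c ∈ thickening δ (F s) ∩ ball (g s) ε := by
    intro t c hc hgc
    have hnear : ∀ᶠ s in 𝓝 t, c ∈ thickening δ (F s) :=
      ((isOpen_setOf_mem_thickening_inter_preimage hΦ hAo c δ).preimage hp).mem_nhds
        (self_subset_thickening hδ _ hc)
    have hclose : ∀ᶠ s in 𝓝 t, dist (g s) c < ε :=
      (g.continuous.continuousAt.dist continuousAt_const).eventually_lt continuousAt_const hgc
    filter_upwards [hnear, hclose] with s hs hsc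
    exact ⟨hs, mem_ball'.2 hsc⟩
  set S : T → Set X := fun t => if t = t₀ then {u} else thickening δ (F t) ∩ ball (g t) ε
  have hSsub : ∀ t, S t ⊆ thickening δ (F t) ∩ ball (g t) ε := fun t => by
    by_cases ht : t = t₀
    · subst ht
      simpa [S, hg₀, hε] using self_subset_thickening hδ _ hu
    · simp [S, ht]
  have hSconv : ∀ t, Convex ℝ (S t) := fun t => by
    by_cases ht : t = t₀
    · simp [S, ht]
    · simpa [S, ht] using
        ((hAc.inter ((convex_singleton _).linear_preimage Φ.toLinearMap)).thickening δ).inter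
          (convex_ball _ _)
  have hSloc : ∀ t, ∃ c, ∀ᶠ s in 𝓝 t, c ∈ S s := fun t => by
    by_cases ht : t = t₀
    · subst ht
      refine ⟨u, (hloc t u hu (by simpa [hg₀] using hε)).mono fun s hs => ?_⟩
      by_cases hst : s = t <;> simp [S, hst, hs]
    · obtain ⟨c, hc, hgc⟩ := mem_thickening_iff.1 (hg t)
      refine ⟨c, ((hloc t c hc hgc).and (isOpen_compl_singleton.mem_nhds ht)).mono ?_⟩
      rintro s ⟨hs, hst⟩
      simpa [S, show s ≠ t₀ from hst] using hs
  obtain ⟨g', hg'⟩ := exists_continuous_forall_mem_convex_of_local_const hSconv hSloc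
  exact ⟨g', fun t => (hSsub t (hg' t)).1, fun t => (hSsub t (hg' t)).2,
    by simpa [S] using hg' t₀⟩

theorem exists_continuous_selection_closure_of_isOpenMap [CompactSpace T] [T2Space T]
    [CompleteSpace X] (hΦ : IsOpenMap Φ) (hAb : IsBounded A) (hAo : IsOpen A)
    (hAc : Convex ℝ A) (hp : Continuous p) (hpA : ∀ t, p t ∈ Φ '' A)
    (hu : u ∈ A ∩ Φ ⁻¹' {p t₀}) :
    ∃ f : C(T, X), (∀ t, f t ∈ closure A ∧ Φ (f t) = p t) ∧ f t₀ = u := by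
  obtain ⟨M, hM, hAM⟩ := hAb.subset_ball_lt 0 u
  set ε : ℕ → ℝ := fun n => M * (1 / 2) ^ n
  have hε : ∀ n, 0 < ε n := fun n => by positivity
  have hconst : ∀ t, u ∈ thickening (ε 0) (A ∩ Φ ⁻¹' {p t}) := fun t => by
    obtain ⟨a, ha, hΦa⟩ := hpA t
    exact mem_thickening_iff.2 ⟨a, ⟨ha, hΦa⟩, by simpa [ε, dist_comm] using hAM ha⟩
  obtain ⟨g, hg⟩ := exists_seq_of_forall_exists_succ
    (P := fun n (g : C(T, X)) => (∀ t, g t ∈ thickening (ε n) (A ∩ Φ ⁻¹' {p t})) ∧ g t₀ = u)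
    (R := fun n g g' => dist g g' ≤ ε n) (a₀ := ContinuousMap.const T u) ⟨hconst, rfl⟩
    fun n g ⟨hgF, hg₀⟩ => by
      obtain ⟨g', hg'F, hg'g, hg'₀⟩ := exists_continuous_finer_approx_selection hΦ hAo hAc hp hu
        (hε n) (hε (n + 1)) g hgF hg₀
      exact ⟨g', ⟨hg'F, hg'₀⟩,
        (ContinuousMap.dist_le (hε n).le).2 fun t => (dist_comm (g t) (g' t) ▸ hg'g t).le⟩
  obtain ⟨f, hf⟩ := cauchySeq_tendsto_of_complete
    (cauchySeq_of_le_geometric (1 / 2) M (by norm_num) fun n => (hg n).2)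
  have hft : ∀ t, Tendsto (fun n => g n t) atTop (𝓝 (f t)) := fun t =>
    ((continuous_eval_const t).tendsto f).comp hf
  have hεlim : Tendsto ε atTop (𝓝 0) := by
    simpa [ε] using (tendsto_pow_atTop_nhds_zero_of_lt_one (r := (1 / 2 : ℝ))
      (by norm_num) (by norm_num)).const_mul M
  refine ⟨f, fun t => ?_, tendsto_nhds_unique (hft t₀) (by simp [(hg _).1.2])⟩
  have hfF := closure_inter_subset_inter_closure _ _
    (mem_closure_of_tendsto_of_mem_thickening (hft t) hεlim fun n => (hg n).1.1 t)
  rwa [(isClosed_singleton.preimage Φ.continuous).closure_eq] at hfF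

end Selection

theorem stmt_6 {X Y : Type*} [NormedAddCommGroup X] [NormedSpace ℝ X] [CompleteSpace X]
    [NormedAddCommGroup Y] [NormedSpace ℝ Y] [CompleteSpace Y]
    (Φ : X →L[ℝ] Y) (hΦ : Function.Surjective Φ)
    (A : Set X) (hAb : IsBounded A) (hAo : IsOpen A) (hAc : Convex ℝ A)
    (K : Set Y) (hK : IsCompact K) (hKA : K ⊆ Φ '' A)
    (z : Y) (hz : z ∈ K) (u : X) (hu : u ∈ Φ ⁻¹' {z} ∩ A) :
    ∃ f : K → X, Continuous f ∧ (∀ y : K, f y ∈ closure A ∧ Φ (f y) = y) ∧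
      f ⟨z, hz⟩ = u := by
  have : CompactSpace K := isCompact_iff_compactSpace.mp hK
  obtain ⟨f, hf, hfz⟩ := exists_continuous_selection_closure_of_isOpenMap (Φ.isOpenMap hΦ) hAb
    hAo hAc continuous_subtype_val (fun y => hKA y.2) (t₀ := ⟨z, hz⟩) ⟨hu.2, hu.1⟩
  exact ⟨f, f.continuous, hf, hfz⟩
end

section
/- Let I be a compact interval, E a Banach space, and f : I × E → E uniformly continuous with relatively compact range. Then the superposition operator Ψ : C¹(I, E) → C⁰(I, E), Ψ(u)(t) = f(t, u(t)), is completely continuous (continuous and maps bounded sets to relatively compact sets) and has bounded range. -/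
open Set Metric Bornology

/-- The space `C¹(I, E)` encoded as pairs `(u, u')` of continuous maps on `I = [a, b]`
(with the product sup-topology, i.e. the `C¹` topology). -/
def C1set (a b : ℝ) (hab : a ≤ b) (E : Type*) [NormedAddCommGroup E] [NormedSpace ℝ E] :
    Set (C(Set.Icc a b, E) × C(Set.Icc a b, E)) :=
  {p | ∀ t : Set.Icc a b, HasDerivWithinAt (Set.IccExtend hab ⇑p.1) (p.2 t) (Set.Icc a b) ↑t}

/-! The superposition operator `u ↦ f(·, u(·))` is uniformly continuous in the sup norm because
`f` is, and its values lie in the bounded set `range f`. A `C¹`-bounded set has uniformly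
bounded derivatives, so by the mean value theorem it is uniformly Lipschitz, hence
equicontinuous; composing with the uniformly continuous `f` keeps the image equicontinuous,
and its values lie in the compact set `closure (range f)`, so Arzelà–Ascoli applies. -/

namespace ContinuousMap

variable {X E F : Type*}

def superposition [TopologicalSpace X] [TopologicalSpace E] [TopologicalSpace F]
    (f : C(X × E, F)) (u : C(X, E)) : C(X, F) :=
  f.comp ((ContinuousMap.id X).prodMk u)

section Metric

variable [PseudoMetricSpace X] [PseudoMetricSpace E] [PseudoMetricSpace F] {f : C(X × E, F)}

theorem uniformEquicontinuous_superposition {ι : Type*} (hf : UniformContinuous f)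
    {u : ι → C(X, E)} (hu : UniformEquicontinuous fun i => ⇑(u i)) :
    UniformEquicontinuous fun i => ⇑(superposition f (u i)) := by
  rw [Metric.uniformEquicontinuous_iff] at hu ⊢
  intro ε hε
  obtain ⟨δ, hδ, hfδ⟩ := Metric.uniformContinuous_iff.mp hf ε hε
  obtain ⟨η, hη, huη⟩ := hu δ hδ
  refine ⟨min δ η, lt_min hδ hη, fun x y hxy i => hfδ ?_⟩
  rw [Prod.dist_eq]
  exact max_lt (hxy.trans_le (min_le_left _ _)) (huη x y (hxy.trans_le (min_le_right _ _)) i)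

variable [CompactSpace X]

theorem uniformContinuous_superposition (hf : UniformContinuous f) :
    UniformContinuous (superposition f) := by
  rw [Metric.uniformContinuous_iff]
  intro ε hε
  obtain ⟨δ, hδ, hfδ⟩ := Metric.uniformContinuous_iff.mp hf (ε / 2) (half_pos hε)
  refine ⟨δ, hδ, fun {u v} huv => ((dist_le (half_pos hε).le).mpr fun x => ?_).trans_lt
    (half_lt_self hε)⟩
  refine (@hfδ (x, u x) (x, v x) ?_).le
  rw [Prod.dist_eq, dist_self]
  exact max_lt hδ ((dist_apply_le_dist x).trans_lt huv)

theorem isBounded_range_superposition (hf : IsBounded (range f)) :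
    IsBounded (range (superposition f)) := by
  obtain ⟨C, hC⟩ := Metric.isBounded_iff.mp hf
  refine Metric.isBounded_iff.mpr ⟨max C 0, ?_⟩
  rintro _ ⟨u, rfl⟩ _ ⟨v, rfl⟩
  exact (dist_le (le_max_right C 0)).mpr fun x =>
    (hC (mem_range_self _) (mem_range_self _)).trans (le_max_left C 0)

end Metric

theorem isCompact_closure_range_of_equicontinuous [TopologicalSpace X] [CompactlyCoherentSpace X]
    [UniformSpace E] [T2Space E] {ι : Type*} {u : ι → C(X, E)}
    (hu : Equicontinuous fun i => ⇑(u i))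
    (hu_pt : ∀ x, ∃ Q, IsCompact Q ∧ ∀ i, u i x ∈ Q) :
    IsCompact (closure (range u)) := by
  have hclosed : IsClosed (range (toUniformOnFunIsCompact : C(X, E) → _)) := by
    rw [range_toUniformOnFunIsCompact]
    exact UniformOnFun.isClosed_setOfPred_continuous CompactlyCoherentSpace.isCoherentWith
  have hrange : (DFunLike.coe ∘ Subtype.val : range u → X → E) =
      fun g => ⇑(u (rangeSplitting u g)) :=
    funext fun g => by rw [Function.comp_apply, apply_rangeSplitting u]
  refine ArzelaAscoli.isCompact_closure_of_isClosedEmbedding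
    (𝔖 := {K : Set X | IsCompact K}) (fun _ hK => hK)
    ⟨isUniformEmbedding_toUniformOnFunIsCompact.isEmbedding, hclosed⟩
    (fun K _ => hrange ▸ (hu.comp _).equicontinuousOn K) fun K _ x _ => ?_
  obtain ⟨Q, hQ, hxQ⟩ := hu_pt x
  exact ⟨Q, hQ, by rintro _ ⟨i, rfl⟩; exact hxQ i⟩

end ContinuousMap

section C1

variable {a b : ℝ} {hab : a ≤ b} {E : Type*} [NormedAddCommGroup E] [NormedSpace ℝ E]

theorem lipschitzWith_of_mem_C1set {p : C(Icc a b, E) × C(Icc a b, E)}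
    (hp : p ∈ C1set a b hab E) :
    LipschitzWith ‖p.2‖₊ p.1 := by
  have hderiv : ∀ x ∈ Icc a b, HasDerivWithinAt (IccExtend hab p.1) (IccExtend hab p.2 x)
      (Icc a b) x := fun x hx => by
    simpa only [IccExtend_of_mem hab _ hx] using hp ⟨x, hx⟩
  have hbound : ∀ x ∈ Icc a b, ‖IccExtend hab p.2 x‖₊ ≤ ‖p.2‖₊ := fun x hx => by
    rw [IccExtend_of_mem hab _ hx]
    exact NNReal.coe_le_coe.mp (p.2.norm_coe_le_norm _)
  have hrestrict : (Icc a b).domRestrict (IccExtend hab p.1) = p.1 :=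
    funext (IccExtend_val hab p.1)
  rw [← hrestrict, ← lipschitzOnWith_iff_restrict]
  exact (convex_Icc a b).lipschitzOnWith_of_nnnorm_hasDerivWithin_le hderiv hbound

theorem exists_lipschitzWith_of_isBounded_C1set {B : Set (C1set a b hab E)} (hB : IsBounded B) :
    ∃ K, ∀ p ∈ B, LipschitzWith K (p.1.1 : Icc a b → E) := by
  obtain ⟨C, hC⟩ := isBounded_iff_forall_norm_le.mp
    ((LipschitzWith.prod_snd.comp (LipschitzWith.subtype_val _)).isBounded_image hB)
  refine ⟨C.toNNReal, fun p hp => (lipschitzWith_of_mem_C1set p.2).weaken ?_⟩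
  rw [← NNReal.coe_le_coe, coe_nnnorm]
  exact (hC _ (mem_image_of_mem _ hp)).trans (Real.le_coe_toNNReal C)

end C1

theorem stmt_13_general {E : Type*} [NormedAddCommGroup E] [NormedSpace ℝ E]
    (a b : ℝ) (hab : a < b)
    (f : Set.Icc a b × E → E) (hf : UniformContinuous f)
    (hfr : IsCompact (closure (range f))) :
    ∃ Ψ : ↥(C1set a b hab.le E) → C(Set.Icc a b, E),
      (∀ p, ∀ t : Set.Icc a b, Ψ p t = f (t, p.1.1 t)) ∧
      Continuous Ψ ∧
      (∀ B : Set ↥(C1set a b hab.le E), IsBounded B → IsCompact (closure (Ψ '' B))) ∧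
      IsBounded (range Ψ) := by
  let F : C(Icc a b × E, E) := ⟨f, hf.continuous⟩
  refine ⟨fun p => F.superposition p.1.1, fun p t => rfl,
    (ContinuousMap.uniformContinuous_superposition hf).continuous.comp
      (continuous_fst.comp continuous_subtype_val), fun B hB => ?_,
    (ContinuousMap.isBounded_range_superposition (hfr.isBounded.subset subset_closure)).subset
      (range_subset_iff.mpr fun p => mem_range_self _)⟩
  obtain ⟨K, hK⟩ := exists_lipschitzWith_of_isBounded_C1set hB
  have hB_equi : UniformEquicontinuous fun p : B => ⇑p.1.1.1 :=
    LipschitzWith.uniformEquicontinuous _ K fun p => hK p p.2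
  rw [image_eq_range]
  exact ContinuousMap.isCompact_closure_range_of_equicontinuous
    (ContinuousMap.uniformEquicontinuous_superposition hf hB_equi).equicontinuous
    fun x => ⟨_, hfr, fun p => subset_closure (mem_range_self _)⟩

theorem stmt_13 {E : Type*} [NormedAddCommGroup E] [NormedSpace ℝ E] [CompleteSpace E]
    (a b : ℝ) (hab : a < b)
    (f : Set.Icc a b × E → E) (hf : UniformContinuous f)
    (hfr : IsCompact (closure (range f))) :
    ∃ Ψ : ↥(C1set a b hab.le E) → C(Set.Icc a b, E),
      (∀ p, ∀ t : Set.Icc a b, Ψ p t = f (t, p.1.1 t)) ∧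
      Continuous Ψ ∧
      (∀ B : Set ↥(C1set a b hab.le E), IsBounded B → IsCompact (closure (Ψ '' B))) ∧
      IsBounded (range Ψ) :=
  stmt_13_general a b hab f hf hfr
end
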